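/- Let γ ≥ 0 be an integer and let S be a γ-hyperelliptic numerical semigroup of genus g with g ≥ 2γ+1. Then the K-weight of S satisfies C(g-2γ, 2) + 2γ ≤ W_K ≤ C(g-2γ, 2) + 2γ², where C(n,2) denotes the binomial coefficient n choose 2. -/

import Mathlib

/-- A numerical semigroup: a subset of ℕ containing 0, closed under addition,
with finite complement. -/
def IsNumericalSemigroup (S : Set ℕ) : Prop :=
  0 ∈ S ∧ (∀ a ∈ S, ∀ b ∈ S, a + b ∈ S) ∧ Sᶜ.Finite

/-- The genus of `S`: the number of gaps (elements of ℕ not in `S`). -/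
noncomputable def genus (S : Set ℕ) : ℕ := Sᶜ.ncard

/-- `gap S i` is the `(i+1)`-st smallest gap of `S`, i.e. `ℓ_{i+1}` (0-indexed). -/
noncomputable def gap (S : Set ℕ) (i : ℕ) : ℕ := Nat.nth (fun n => n ∉ S) i

/-- The K-weight of `S`: `W_K = Σ_{i=1}^{g-1} (ℓ_i - i) + g - 1`. -/
noncomputable def Kweight (S : Set ℕ) : ℕ :=
  (∑ i ∈ Finset.range (genus S - 1), (gap S i - (i + 1))) + genus S - 1

/-- The S-weight of `S`: `W_S = Σ_{i=1}^{g} (ℓ_i - i)`. -/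
noncomputable def Sweight (S : Set ℕ) : ℕ :=
  ∑ i ∈ Finset.range (genus S), (gap S i - (i + 1))

/-- `S` is γ-hyperelliptic: it has exactly γ even elements in `[2, 4γ]`, and the
`(γ+1)`-st smallest positive element of `S` is `4γ+2`. -/
def GammaHyperelliptic (γ : ℕ) (S : Set ℕ) : Prop :=
  {n | n ∈ Set.Icc 2 (4 * γ) ∧ Even n ∧ n ∈ S}.ncard = γ ∧
  Nat.nth (fun n => n ∈ S ∧ n ≠ 0) γ = 4 * γ + 2

/-!
Let `F` be the Frobenius number of `S` (odd here), `γ` the number of even gaps and `k` the number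
of odd gaps below `F`, so that `g = γ + k + 1`. Writing each gap as twice the number of smaller
integers of its parity (plus one if it is odd), and sorting those integers into gaps and elements
of `S`, gives `W_K = C(k - γ + 1, 2) + 2w + 2q`, where `w` counts the pairs `s < ℓ` of an even
element `s ∈ S` and an even gap `ℓ`, and `q` the pairs `s < ℓ < F` of an odd element and an odd gap.
As `S` is additively closed, `(ℓ, s) ↦ (ℓ - s, ℓ)` and `(ℓ, s) ↦ (ℓ - s, F - s)` inject these into
pairs `x ≤ y`, resp. `x < y`, of even gaps, so `γ ≤ w ≤ C(γ, 2) + γ` (`s = 0` always counts) and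
`q ≤ C(γ, 2)`.

In a `γ`-hyperelliptic semigroup every even `n ≥ 4γ + 2` lies in `S`: otherwise `s ↦ n - s` would
map the `γ + 1` even elements of `S` in `[2, 4γ + 2]` injectively into the `γ` even gaps in
`[2, 4γ]`. Hence there are exactly `γ` even gaps, and `F ≥ 4γ + 1` is odd.
-/

open Finset Nat

lemma Finset.sum_card_filter_lt_eq_choose_two {α : Type*} [LinearOrder α] (s : Finset α) :
    ∑ x ∈ s, #{y ∈ s | y < x} = (#s).choose 2 := by
  simp_rw [← card_product_filter_lt, card_filter, sum_product_right]

lemma Finset.card_product_filter_le {α : Type*} [LinearOrder α] (s : Finset α) :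
    #{x ∈ s ×ˢ s | x.1 ≤ x.2} = (#s).choose 2 + #s := by
  have hdiag : {x ∈ s ×ˢ s | x.1 = x.2} = s.diag := by
    ext x
    simp only [mem_filter, mem_product, mem_diag]
    grind
  rw [← card_product_filter_lt, ← diag_card s, ← hdiag,
    ← card_union_of_disjoint (disjoint_filter.2 fun x _ h => h.ne), ← filter_or]
  simp_rw [le_iff_lt_or_eq]

lemma Nat.sum_range_add_one_eq_choose_two (n : ℕ) : ∑ i ∈ range n, (i + 1) = (n + 1).choose 2 := by
  simpa [sum_range_id, choose_two_right] using (sum_range_succ' (fun i => i) n).symm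

lemma Nat.count_even (n : ℕ) : count Even n = (n + 1) / 2 := by
  induction n with
  | zero => rfl
  | succ n ih =>
    rw [count_succ, ih]
    split_ifs with h <;> rw [Nat.even_iff] at * <;> omega

lemma Nat.count_odd (n : ℕ) : count Odd n = n / 2 := by
  induction n with
  | zero => rfl
  | succ n ih =>
    rw [count_succ, ih]
    split_ifs with h <;> rw [Nat.odd_iff] at * <;> omega

lemma card_filter_even_Icc (k : ℕ) : #{n ∈ Icc 2 (2 * k) | Even n} = k := by
  have : {n ∈ Icc 2 (2 * k) | Even n} = (Icc 1 k).image (2 * ·) := by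
    ext n
    simp only [mem_filter, mem_Icc, mem_image, Nat.even_iff]
    constructor
    · rintro ⟨⟨h2, hk⟩, he⟩
      exact ⟨n / 2, ⟨by omega, by omega⟩, by omega⟩
    · rintro ⟨m, ⟨h1, hk⟩, rfl⟩
      omega
  rw [this, card_image_of_injective _ (mul_right_injective₀ two_ne_zero), card_Icc]
  omega

/-- With `A` the even gaps, or the odd gaps below the Frobenius number, this is the `w`, resp. `q`,
of the sketch above. -/
def nonmemberPairs (P : ℕ → Prop) [DecidablePred P] (A : Finset ℕ) : ℕ :=
  ∑ a ∈ A, #{b ∈ range a | P b ∧ b ∉ A}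

lemma sum_count_eq_choose_two_add (P : ℕ → Prop) [DecidablePred P] {A : Finset ℕ}
    (hA : ∀ a ∈ A, P a) : ∑ a ∈ A, count P a = (#A).choose 2 + nonmemberPairs P A := by
  have h (a : ℕ) : count P a = #{b ∈ A | b < a} + #{b ∈ range a | P b ∧ b ∉ A} := by
    rw [count_eq_card_filter_range, ← card_filter_add_card_filter_not (p := (· ∈ A)),
      filter_filter, filter_filter]
    congr 2
    ext b
    simp only [mem_filter, mem_range]
    grind
  rw [sum_congr rfl fun a _ => h a, sum_add_distrib, sum_card_filter_lt_eq_choose_two]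
  rfl

lemma sum_eq_of_forall_even {A : Finset ℕ} (hA : ∀ a ∈ A, Even a) :
    ∑ a ∈ A, a = 2 * (#A).choose 2 + 2 * nonmemberPairs Even A := by
  rw [← mul_add, ← sum_count_eq_choose_two_add Even hA, mul_sum]
  refine sum_congr rfl fun a ha => ?_
  have := Nat.even_iff.1 (hA a ha)
  rw [count_even]
  omega

lemma sum_eq_of_forall_odd {A : Finset ℕ} (hA : ∀ a ∈ A, Odd a) :
    ∑ a ∈ A, a = #A + 2 * (#A).choose 2 + 2 * nonmemberPairs Odd A := by
  rw [add_assoc, ← mul_add, ← sum_count_eq_choose_two_add Odd hA, mul_sum, card_eq_sum_ones,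
    ← sum_add_distrib]
  refine sum_congr rfl fun a ha => ?_
  have := Nat.odd_iff.1 (hA a ha)
  rw [count_odd]
  omega

lemma card_le_nonmemberPairs_even {A : Finset ℕ} (h0 : 0 ∉ A) : #A ≤ nonmemberPairs Even A := by
  rw [card_eq_sum_ones]
  refine sum_le_sum fun a ha => card_pos.2 ⟨0, ?_⟩
  simp only [mem_filter, mem_range]
  exact ⟨Nat.pos_of_ne_zero fun h => h0 (h ▸ ha), ⟨0, rfl⟩, h0⟩

namespace Nat

variable {p : ℕ → Prop}

lemma add_one_le_nth (h0 : ¬p 0) (hf : (Set.ofPred p).Finite) {i : ℕ} (hi : i < #hf.toFinset) :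
    i + 1 ≤ nth p i := by
  induction i with
  | zero => exact one_le_iff_ne_zero.2 fun h => h0 (h ▸ nth_mem_of_lt_card hf hi)
  | succ i ih => exact (ih (by omega)).trans_lt (nth_lt_nth_of_lt_card hf (lt_add_one i) hi)

lemma sum_range_card_nth (hf : (Set.ofPred p).Finite) :
    ∑ i ∈ range #hf.toFinset, nth p i = ∑ x ∈ hf.toFinset, x := by
  have himage : (range #hf.toFinset).image (nth p) = hf.toFinset := by
    apply coe_injective
    simp
  conv_rhs => rw [← himage]
  refine (sum_image (f := id) fun i hi j hj h => nth_injOn hf ?_ ?_ h).symm <;> simp_all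

end Nat

namespace IsNumericalSemigroup

variable {S : Set ℕ} {F : ℕ}

lemma sub_notMem (hS : IsNumericalSemigroup S) {a x : ℕ} (ha : a ∈ S) (hx : x ∉ S)
    (hax : a ≤ x) : x - a ∉ S :=
  fun h => hx (by simpa [Nat.add_sub_cancel' hax] using hS.2.1 a ha _ h)

lemma toFinset_compl_eq_insert (hS : IsNumericalSemigroup S) (hF : IsGreatest Sᶜ F)
    {L : Finset ℕ} (hL : ∀ n, n ∈ L ↔ n < F ∧ n ∉ S) : hS.2.2.toFinset = insert F L := by
  ext n
  simp only [Set.Finite.mem_toFinset, Set.mem_compl_iff, mem_insert, hL]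
  refine ⟨fun h => ?_, ?_⟩
  · rcases (hF.2 h).eq_or_lt with rfl | hlt
    exacts [.inl rfl, .inr ⟨hlt, h⟩]
  · rintro (rfl | ⟨-, h⟩)
    exacts [hF.1, h]

lemma infinite_setOf_mem_ne_zero (hS : IsNumericalSemigroup S) :
    {n | n ∈ S ∧ n ≠ 0}.Infinite := by
  have : {n | n ∈ S ∧ n ≠ 0} = S \ {0} := by ext; simp
  rw [this]
  exact (compl_compl S ▸ hS.2.2.infinite_compl).sdiff (Set.finite_singleton 0)

end IsNumericalSemigroup

section Weight

variable {S : Set ℕ} {F : ℕ}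

lemma genus_eq_card_add_one (hS : IsNumericalSemigroup S) (hF : IsGreatest Sᶜ F)
    {L : Finset ℕ} (hL : ∀ n, n ∈ L ↔ n < F ∧ n ∉ S) : genus S = #L + 1 := by
  rw [genus, Set.ncard_eq_toFinset_card Sᶜ hS.2.2, hS.toFinset_compl_eq_insert hF hL,
    card_insert_of_notMem (by simp [hL])]

theorem Kweight_add_choose_two_eq_sum (hS : IsNumericalSemigroup S) (hF : IsGreatest Sᶜ F)
    {L : Finset ℕ} (hL : ∀ n, n ∈ L ↔ n < F ∧ n ∉ S) :
    Kweight S + (#L + 1).choose 2 = ∑ x ∈ L, x + #L := by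
  set p : ℕ → Prop := fun n => n ∉ S
  have hf : (Set.ofPred p).Finite := hS.2.2
  have hFL : F ∉ L := by simp [hL]
  have hcard : #hf.toFinset = #L + 1 := by
    rw [hS.toFinset_compl_eq_insert hF hL, card_insert_of_notMem hFL]
  have hlast : nth p #L = F := by
    obtain ⟨j, hj, rfl⟩ := exists_lt_card_finite_nth_eq hf hF.1
    rw [hcard] at hj
    rcases (Nat.lt_succ_iff.1 hj).eq_or_lt with rfl | hjL
    · rfl
    exact absurd (hF.2 (nth_mem_of_lt_card hf (by omega)))
      (not_le.2 (nth_lt_nth_of_lt_card hf hjL (by omega)))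
  have hsum : ∑ i ∈ range #L, nth p i = ∑ x ∈ L, x := by
    have := Nat.sum_range_card_nth hf
    rw [hcard, sum_range_succ, hlast, hS.toFinset_compl_eq_insert hF hL, sum_insert hFL] at this
    omega
  have hweight : ∑ i ∈ range #L, (gap S i - (i + 1)) + (#L + 1).choose 2 = ∑ x ∈ L, x := by
    rw [← hsum, ← sum_range_add_one_eq_choose_two, ← sum_add_distrib]
    exact sum_congr rfl fun i hi =>
      Nat.sub_add_cancel (Nat.add_one_le_nth (fun h => h hS.1) hf (by simp at hi; omega))
  rw [Kweight, genus_eq_card_add_one hS hF hL, Nat.add_sub_cancel]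
  omega

end Weight

section OddFrobenius

variable {S : Set ℕ} {F : ℕ} {Le Lo : Finset ℕ}

lemma disjoint_of_even_odd (hLe : ∀ n, n ∈ Le ↔ n < F ∧ Even n ∧ n ∉ S)
    (hLo : ∀ n, n ∈ Lo ↔ n < F ∧ Odd n ∧ n ∉ S) : Disjoint Le Lo :=
  disjoint_left.2 fun n he ho => Nat.not_even_iff_odd.2 ((hLo n).1 ho).2.1 ((hLe n).1 he).2.1

lemma mem_union_iff_of_even_odd (hLe : ∀ n, n ∈ Le ↔ n < F ∧ Even n ∧ n ∉ S)
    (hLo : ∀ n, n ∈ Lo ↔ n < F ∧ Odd n ∧ n ∉ S) (n : ℕ) : n ∈ Le ∪ Lo ↔ n < F ∧ n ∉ S := by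
  rw [mem_union, hLe, hLo]
  have := n.even_or_odd
  tauto

theorem Kweight_add_choose_two_eq_nonmemberPairs (hS : IsNumericalSemigroup S)
    (hF : IsGreatest Sᶜ F) (hLe : ∀ n, n ∈ Le ↔ n < F ∧ Even n ∧ n ∉ S)
    (hLo : ∀ n, n ∈ Lo ↔ n < F ∧ Odd n ∧ n ∉ S) :
    Kweight S + (#Le + #Lo + 1).choose 2 =
      2 * (#Le).choose 2 + 2 * nonmemberPairs Even Le + 2 * (#Lo).choose 2 +
        2 * nonmemberPairs Odd Lo + #Le + 2 * #Lo := by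
  have hdisj := disjoint_of_even_odd hLe hLo
  have hK := Kweight_add_choose_two_eq_sum hS hF (mem_union_iff_of_even_odd hLe hLo)
  rw [card_union_of_disjoint hdisj, sum_union hdisj,
    sum_eq_of_forall_even fun a ha => ((hLe a).1 ha).2.1,
    sum_eq_of_forall_odd fun a ha => ((hLo a).1 ha).2.1] at hK
  omega

lemma nonmemberPairs_even_le (hS : IsNumericalSemigroup S)
    (hLe : ∀ n, n ∈ Le ↔ n < F ∧ Even n ∧ n ∉ S) :
    nonmemberPairs Even Le ≤ (#Le).choose 2 + #Le := by
  rw [nonmemberPairs, ← card_sigma, ← card_product_filter_le]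
  refine card_le_card_of_injOn (fun x => (x.1 - x.2, x.1)) ?_ ?_
  · rintro ⟨x, b⟩ h
    simp only [coe_sigma, Set.mem_sigma_iff, mem_coe, mem_filter, mem_range, hLe,
      mem_product] at h ⊢
    obtain ⟨⟨hxF, hx, hxS⟩, hbx, hb, hbLe⟩ := h
    have hbS : b ∈ S := by by_contra h; exact hbLe ⟨by omega, hb, h⟩
    refine ⟨⟨⟨by omega, ?_, hS.sub_notMem hbS hxS hbx.le⟩, hxF, hx, hxS⟩, by omega⟩
    rw [Nat.even_iff] at hb hx ⊢
    omega
  · rintro ⟨x, b⟩ h ⟨y, c⟩ h' hxy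
    simp only [coe_sigma, Set.mem_sigma_iff, mem_coe, mem_filter, mem_range,
      Prod.mk.injEq] at h h' hxy
    obtain ⟨h1, rfl⟩ := hxy
    have : b = c := by omega
    subst this
    rfl

lemma nonmemberPairs_odd_le (hS : IsNumericalSemigroup S) (hF : IsGreatest Sᶜ F)
    (hFodd : Odd F) (hLe : ∀ n, n ∈ Le ↔ n < F ∧ Even n ∧ n ∉ S)
    (hLo : ∀ n, n ∈ Lo ↔ n < F ∧ Odd n ∧ n ∉ S) :
    nonmemberPairs Odd Lo ≤ (#Le).choose 2 := by
  rw [nonmemberPairs, ← card_sigma, ← card_product_filter_lt]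
  refine card_le_card_of_injOn (fun x => (x.1 - x.2, F - x.2)) ?_ ?_
  · rintro ⟨o, u⟩ h
    simp only [coe_sigma, Set.mem_sigma_iff, mem_coe, mem_filter, mem_range, hLe, hLo,
      mem_product] at h ⊢
    obtain ⟨⟨hoF, ho, hoS⟩, huo, hu, huLo⟩ := h
    have huS : u ∈ S := by by_contra h; exact huLo ⟨by omega, hu, h⟩
    rw [Nat.odd_iff] at ho hu hFodd
    refine ⟨⟨⟨by omega, ?_, hS.sub_notMem huS hoS huo.le⟩,
      ⟨by omega, ?_, hS.sub_notMem huS hF.1 (by omega)⟩⟩, by omega⟩ <;>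
    · rw [Nat.even_iff]
      omega
  · rintro ⟨o, u⟩ h ⟨o', u'⟩ h' hxy
    simp only [coe_sigma, Set.mem_sigma_iff, mem_coe, mem_filter, mem_range, hLo,
      Prod.mk.injEq] at h h' hxy
    have : u = u' := by omega
    subst this
    have : o = o' := by omega
    subst this
    rfl

theorem Kweight_bounds_of_odd_frobenius (hS : IsNumericalSemigroup S) (hF : IsGreatest Sᶜ F)
    (hFodd : Odd F) (hLe : ∀ n, n ∈ Le ↔ n < F ∧ Even n ∧ n ∉ S)
    (hgenus : 2 * #Le + 1 ≤ genus S) :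
    (genus S - 2 * #Le).choose 2 + 2 * #Le ≤ Kweight S ∧
      Kweight S ≤ (genus S - 2 * #Le).choose 2 + 2 * #Le ^ 2 := by
  classical
  set Lo := {n ∈ range F | Odd n ∧ n ∉ S}
  have hLo : ∀ n, n ∈ Lo ↔ n < F ∧ Odd n ∧ n ∉ S := by simp [Lo]
  rw [genus_eq_card_add_one hS hF (mem_union_iff_of_even_odd hLe hLo),
    card_union_of_disjoint (disjoint_of_even_odd hLe hLo)] at hgenus ⊢
  obtain ⟨j, hj⟩ := Nat.exists_eq_add_of_le (show #Le ≤ #Lo by omega)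
  have hK := Kweight_add_choose_two_eq_nonmemberPairs hS hF hLe hLo
  have hw₀ := card_le_nonmemberPairs_even fun h => ((hLe 0).1 h).2.2 hS.1
  have hw₁ := nonmemberPairs_even_le hS hLe
  have hQ := nonmemberPairs_odd_le hS hF hFodd hLe hLo
  have hchoose : (2 * #Le + j + 1).choose 2 + (j + 1).choose 2 =
      2 * (#Le).choose 2 + 2 * (#Le + j).choose 2 + 3 * #Le + 2 * j := by
    rw [← Nat.cast_inj (R := ℚ)]
    push_cast [Nat.cast_choose_two]
    ring
  have hsq : 2 * (#Le).choose 2 + #Le = #Le ^ 2 := by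
    rw [← Nat.cast_inj (R := ℚ)]
    push_cast [Nat.cast_choose_two]
    ring
  rw [hj, show #Le + (#Le + j) + 1 = 2 * #Le + j + 1 by ring] at hK ⊢
  rw [show 2 * #Le + j + 1 - 2 * #Le = j + 1 by omega]
  constructor <;> linarith

end OddFrobenius

namespace GammaHyperelliptic

open scoped Classical

variable {γ : ℕ} {S : Set ℕ}

lemma four_mul_add_two_mem (hS : IsNumericalSemigroup S) (hγ : GammaHyperelliptic γ S) :
    4 * γ + 2 ∈ S :=
  (hγ.2 ▸ nth_mem_of_infinite hS.infinite_setOf_mem_ne_zero γ).1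

lemma card_filter_even_mem (hγ : GammaHyperelliptic γ S) :
    #{n ∈ Icc 2 (4 * γ) | Even n ∧ n ∈ S} = γ := by
  rw [← Set.ncard_coe_finset]
  convert hγ.1 using 2
  ext n
  simp

lemma even_of_mem (hS : IsNumericalSemigroup S) (hγ : GammaHyperelliptic γ S) {n : ℕ}
    (hn : n ∈ S) (h0 : n ≠ 0) (hlt : n < 4 * γ + 2) : Even n := by
  have hcount : count (fun n => n ∈ S ∧ n ≠ 0) (4 * γ + 2) = γ :=
    hγ.2 ▸ count_nth_of_infinite hS.infinite_setOf_mem_ne_zero γ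
  rw [count_eq_card_filter_range] at hcount
  have hsub : {n ∈ Icc 2 (4 * γ) | Even n ∧ n ∈ S} ⊆ {n ∈ range (4 * γ + 2) | n ∈ S ∧ n ≠ 0} := by
    intro m hm
    simp only [mem_filter, mem_Icc, mem_range] at hm ⊢
    exact ⟨by omega, hm.2.2, by omega⟩
  have heq := eq_of_subset_of_card_le hsub (by rw [hcount, card_filter_even_mem hγ])
  have : n ∈ {n ∈ range (4 * γ + 2) | n ∈ S ∧ n ≠ 0} := by simp [hn, h0, hlt]
  rw [← heq] at this
  exact (mem_filter.1 this).2.1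

lemma four_mul_add_one_notMem (hS : IsNumericalSemigroup S) (hγ : GammaHyperelliptic γ S) :
    4 * γ + 1 ∉ S := fun h => by
  have := Nat.even_iff.1 (hγ.even_of_mem hS h (by omega) (by omega))
  omega

lemma card_filter_even_notMem (hγ : GammaHyperelliptic γ S) :
    #{n ∈ Icc 2 (4 * γ) | Even n ∧ n ∉ S} = γ := by
  have h := card_filter_add_card_filter_not (s := {n ∈ Icc 2 (2 * (2 * γ)) | Even n}) (· ∈ S)
  rw [card_filter_even_Icc, filter_filter, filter_filter, show 2 * (2 * γ) = 4 * γ by ring,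
    card_filter_even_mem hγ] at h
  omega

lemma mem_of_even (hS : IsNumericalSemigroup S) (hγ : GammaHyperelliptic γ S) {n : ℕ}
    (hn : Even n) (hle : 4 * γ + 2 ≤ n) : n ∈ S := by
  induction n using Nat.strong_induction_on with
  | _ n ih =>
  by_contra hnS
  have hn4 : 4 * γ + 4 ≤ n := by
    have : n ≠ 4 * γ + 2 := fun h => hnS (h ▸ hγ.four_mul_add_two_mem hS)
    rw [Nat.even_iff] at hn
    omega
  have hmaps : ∀ s ∈ insert (4 * γ + 2) {s ∈ Icc 2 (4 * γ) | Even s ∧ s ∈ S},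
      n - s ∈ {y ∈ Icc 2 (4 * γ) | Even y ∧ y ∉ S} := by
    intro s hs
    have hs' : 2 ≤ s ∧ s ≤ 4 * γ + 2 ∧ Even s ∧ s ∈ S := by
      simp only [mem_insert, mem_filter, mem_Icc] at hs
      rcases hs with rfl | ⟨⟨h2, h4⟩, he, hsS⟩
      · exact ⟨by omega, le_rfl, ⟨2 * γ + 1, by ring⟩, hγ.four_mul_add_two_mem hS⟩
      · exact ⟨h2, by omega, he, hsS⟩
    obtain ⟨h2, h4, hse, hsS⟩ := hs'
    have hsub := hS.sub_notMem hsS hnS (by omega)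
    have hsube : Even (n - s) := by
      rw [Nat.even_iff] at hn hse ⊢
      omega
    have hlt : n - s < 4 * γ + 2 := by
      by_contra h
      exact hsub (ih _ (by omega) hsube (by omega))
    rw [Nat.even_iff] at hsube
    simp only [mem_filter, mem_Icc, Nat.even_iff]
    exact ⟨⟨by omega, by omega⟩, hsube, hsub⟩
  have hcard := card_le_card_of_injOn (fun s => n - s) hmaps fun a ha b hb hab => by
    simp only [coe_insert, coe_filter, Set.mem_insert_iff, Set.mem_ofPred_eq, mem_Icc] at ha hb hab
    omega
  rw [card_insert_of_notMem (by simp), card_filter_even_mem hγ,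
    card_filter_even_notMem hγ] at hcard
  omega

lemma odd_of_isGreatest (hS : IsNumericalSemigroup S) (hγ : GammaHyperelliptic γ S) {F : ℕ}
    (hF : IsGreatest Sᶜ F) : Odd F := by
  have h4 : 4 * γ + 1 ≤ F := hF.2 (hγ.four_mul_add_one_notMem hS)
  by_contra hodd
  rw [Nat.not_odd_iff_even] at hodd
  exact hF.1 (hγ.mem_of_even hS hodd (by rw [Nat.even_iff] at hodd; omega))

lemma card_even_gaps (hS : IsNumericalSemigroup S) (hγ : GammaHyperelliptic γ S) {F : ℕ}
    (hF : IsGreatest Sᶜ F) {Le : Finset ℕ} (hLe : ∀ n, n ∈ Le ↔ n < F ∧ Even n ∧ n ∉ S) :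
    #Le = γ := by
  have h4 : 4 * γ + 1 ≤ F := hF.2 (hγ.four_mul_add_one_notMem hS)
  rw [← hγ.card_filter_even_notMem]
  congr 1
  ext n
  simp only [hLe, mem_filter, mem_Icc]
  constructor
  · rintro ⟨-, he, hnS⟩
    have h0 : n ≠ 0 := fun h => hnS (h ▸ hS.1)
    have hlt : n < 4 * γ + 2 := by
      by_contra h
      exact hnS (hγ.mem_of_even hS he (by omega))
    rw [Nat.even_iff] at he
    exact ⟨⟨by omega, by omega⟩, Nat.even_iff.2 he, hnS⟩
  · rintro ⟨⟨-, h⟩, he, hnS⟩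
    exact ⟨by omega, he, hnS⟩

end GammaHyperelliptic

theorem Kweight_bounds (γ g : ℕ) (S : Set ℕ)
    (hS : IsNumericalSemigroup S) (hγ : GammaHyperelliptic γ S)
    (hg : genus S = g) (hgen : 2 * γ + 1 ≤ g) :
    Nat.choose (g - 2 * γ) 2 + 2 * γ ≤ Kweight S ∧
      Kweight S ≤ Nat.choose (g - 2 * γ) 2 + 2 * γ ^ 2 := by
  obtain ⟨F, hF⟩ := hS.2.2.bddAbove.exists_isGreatest_of_nonempty
    ⟨_, hγ.four_mul_add_one_notMem hS⟩
  classical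
  have hLe : ∀ n, n ∈ {n ∈ range F | Even n ∧ n ∉ S} ↔ n < F ∧ Even n ∧ n ∉ S := by simp
  subst hg
  rw [← hγ.card_even_gaps hS hF hLe] at hgen ⊢
  exact Kweight_bounds_of_odd_frobenius hS hF (hγ.odd_of_isGreatest hS hF) hLe hgen
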